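/- arXiv:0905.4411 — 3 statements merged into one kernel-verified Lean document; each statement's English description precedes it below -/
import Mathlib

section
/- For all real numbers x, y ≥ 0 and p ≥ 2, one has (x - y)·(x^(p-1) - y^(p-1)) ≥ (4(p-1)/p²)·(x^(p/2) - y^(p/2))². -/
/-!
For `y ≤ x`, both differences are integrals over `[y, x]`:
`x^(p/2) - y^(p/2) = (p/2) ∫ t^(p/2-1)` and `x^(p-1) - y^(p-1) = (p-1) ∫ t^(p-2)`.
Since `t^(p-2) = (t^(p/2-1))^2`, the inequality is Cauchy–Schwarz
`(∫ f)^2 ≤ (x - y) ∫ f^2` for `f t = t^(p/2-1)`.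
-/

open MeasureTheory Set

theorem sq_integral_le_measureReal_mul_integral_sq {α : Type*} [MeasurableSpace α]
    {μ : Measure α} [IsFiniteMeasure μ] {f : α → ℝ} (hf : Integrable f μ)
    (hf2 : Integrable (fun x => f x ^ 2) μ) :
    (∫ x, f x ∂μ) ^ 2 ≤ μ.real univ * ∫ x, f x ^ 2 ∂μ := by
  rcases eq_zero_or_neZero μ with rfl | hμ
  · simp
  have jensen : (⨍ x, f x ∂μ) ^ 2 ≤ ⨍ x, f x ^ 2 ∂μ :=
    (even_two.convexOn_pow (𝕜 := ℝ)).map_average_le (continuous_pow 2).continuousOn isClosed_univ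
      (by simp) hf hf2
  have hm : μ.real univ ≠ 0 := measureReal_univ_ne_zero
  calc (∫ x, f x ∂μ) ^ 2 = μ.real univ ^ 2 * (⨍ x, f x ∂μ) ^ 2 := by
        rw [average_eq, smul_eq_mul]; field_simp
    _ ≤ μ.real univ ^ 2 * ⨍ x, f x ^ 2 ∂μ := by gcongr
    _ = μ.real univ * ∫ x, f x ^ 2 ∂μ := by
        rw [average_eq, smul_eq_mul]; field_simp

theorem sq_intervalIntegral_le_mul_integral_sq {f : ℝ → ℝ} {a b : ℝ} (hab : a ≤ b)
    (hf : IntervalIntegrable f volume a b)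
    (hf2 : IntervalIntegrable (fun t => f t ^ 2) volume a b) :
    (∫ t in a..b, f t) ^ 2 ≤ (b - a) * ∫ t in a..b, f t ^ 2 := by
  rw [intervalIntegral.integral_of_le hab, intervalIntegral.integral_of_le hab]
  convert sq_integral_le_measureReal_mul_integral_sq hf.1 hf2.1 using 2
  rw [measureReal_restrict_apply_univ, Real.volume_real_Ioc_of_le hab]

theorem stroock_inequality_of_le {x y p : ℝ} (hy : 0 ≤ y) (hp : 2 ≤ p) (hxy : y ≤ x) :
    4 * (p - 1) / p ^ 2 * (x ^ (p / 2) - y ^ (p / 2)) ^ 2 ≤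
      (x - y) * (x ^ (p - 1) - y ^ (p - 1)) := by
  have hcont : Continuous fun t : ℝ => t ^ (p / 2 - 1) :=
    Real.continuous_rpow_const (by linarith)
  have cs := sq_intervalIntegral_le_mul_integral_sq hxy (hcont.intervalIntegrable y x)
    ((hcont.pow 2).intervalIntegrable y x)
  have hsq : ∫ t in y..x, (t ^ (p / 2 - 1)) ^ 2 = ∫ t in y..x, t ^ (p - 2) := by
    refine intervalIntegral.integral_congr fun t ht => ?_
    have ht : 0 ≤ t := hy.trans (by simpa [hxy] using ht.1)
    rw [← Real.rpow_natCast, ← Real.rpow_mul ht]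
    ring_nf
  rw [hsq, integral_rpow (by left; linarith), integral_rpow (by left; linarith)] at cs
  norm_num [show p - 2 + 1 = p - 1 by ring] at cs
  have hp1 : 0 < p - 1 := by linarith
  calc 4 * (p - 1) / p ^ 2 * (x ^ (p / 2) - y ^ (p / 2)) ^ 2
      = (p - 1) * ((x ^ (p / 2) - y ^ (p / 2)) / (p / 2)) ^ 2 := by
        field_simp; ring
    _ ≤ (p - 1) * ((x - y) * ((x ^ (p - 1) - y ^ (p - 1)) / (p - 1))) := by gcongr
    _ = (x - y) * (x ^ (p - 1) - y ^ (p - 1)) := by field_simp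

theorem stmt_3 (x y p : ℝ) (hx : 0 ≤ x) (hy : 0 ≤ y) (hp : 2 ≤ p) :
    4 * (p - 1) / p ^ 2 * (x ^ (p / 2) - y ^ (p / 2)) ^ 2 ≤
      (x - y) * (x ^ (p - 1) - y ^ (p - 1)) := by
  rcases le_total y x with hxy | hxy
  · exact stroock_inequality_of_le hy hp hxy
  · have h := stroock_inequality_of_le hx hp hxy
    calc 4 * (p - 1) / p ^ 2 * (x ^ (p / 2) - y ^ (p / 2)) ^ 2
        = 4 * (p - 1) / p ^ 2 * (y ^ (p / 2) - x ^ (p / 2)) ^ 2 := by ring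
      _ ≤ (y - x) * (y ^ (p - 1) - x ^ (p - 1)) := h
      _ = (x - y) * (x ^ (p - 1) - y ^ (p - 1)) := by ring
end

section
/- Let μ be a probability measure on S = {0,…,n} and f : S → ℝ. Then Var_μ(f) ≤ n·∑_{i=0}^{n-1} (f(i+1) - f(i))²·μ({0,…,i})·μ({i+1,…,n}), where Var_μ(f) = ∑ₓ f(x)²μ(x) - (∑ₓ f(x)μ(x))². -/
/-!
Write `2 Var_μ(f) = ∑_{x,y} μ(x) μ(y) (f x - f y)²`. By Cauchy–Schwarz, `(f x - f y)²` is at most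
`|x - y| ≤ n` times the sum of the squared increments `(f (i+1) - f i)²` over the edges `i` lying
between `x` and `y`. After exchanging the sums, edge `i` lies between `x` and `y` exactly when one
of them is in `{0,…,i}` and the other in `{i+1,…,n}`, an event of `μ ⊗ μ`-mass
`2 μ({0,…,i}) μ({i+1,…,n})`.
-/

open Finset

theorem two_mul_sum_sq_mul_sub_sq_sum_mul {ι : Type*} (s : Finset ι) (μ f : ι → ℝ)
    (hμ : ∑ x ∈ s, μ x = 1) :
    2 * (∑ x ∈ s, f x ^ 2 * μ x - (∑ x ∈ s, f x * μ x) ^ 2) =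
      ∑ x ∈ s, ∑ y ∈ s, μ x * μ y * (f x - f y) ^ 2 := by
  have expand : ∀ x y, μ x * μ y * (f x - f y) ^ 2 =
      f x ^ 2 * μ x * μ y + f y ^ 2 * μ y * μ x - 2 * (f x * μ x) * (f y * μ y) := by
    intros; ring
  simp only [expand, sum_add_distrib, sum_sub_distrib, ← mul_sum, ← sum_mul, hμ]
  ring

theorem sq_sub_le_mul_sum_sq_sub_succ (f : ℕ → ℝ) {x y : ℕ} (h : y ≤ x) :
    (f x - f y) ^ 2 ≤ (x - y : ℕ) * ∑ i ∈ Ico y x, (f (i + 1) - f i) ^ 2 := by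
  rw [← sum_Ico_sub f h, ← Nat.card_Ico]
  exact sq_sum_le_card_mul_sum_sq

theorem sq_sub_le_mul_sum_crossing (f : ℕ → ℝ) {n x y : ℕ} (hx : x ≤ n) (hy : y ≤ n) :
    (f x - f y) ^ 2 ≤ n * ∑ i ∈ range n,
      if min x y ≤ i ∧ i < max x y then (f (i + 1) - f i) ^ 2 else 0 := by
  wlog h : y ≤ x generalizing x y
  · simpa only [min_comm, max_comm, sub_sq_comm] using this hy hx (le_of_not_ge h)
  have crossing : (range n).filter (fun i => min x y ≤ i ∧ i < max x y) = Ico y x := by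
    ext i; simp only [mem_filter, mem_range, mem_Ico, min_eq_right h, max_eq_left h]; omega
  rw [← sum_filter, crossing]
  refine (sq_sub_le_mul_sum_sq_sub_succ f h).trans ?_
  exact mul_le_mul_of_nonneg_right (mod_cast (Nat.sub_le x y).trans hx)
    (sum_nonneg fun _ _ => sq_nonneg _)

theorem sum_sum_crossing_mul {ι : Type*} [LinearOrder ι] (s : Finset ι) (μ : ι → ℝ) (i : ι) :
    ∑ x ∈ s, ∑ y ∈ s, (if min x y ≤ i ∧ i < max x y then μ x * μ y else 0) =
      2 * (∑ x ∈ s with x ≤ i, μ x) * ∑ x ∈ s with i < x, μ x := by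
  have split : ∀ x y, (if min x y ≤ i ∧ i < max x y then μ x * μ y else 0) =
      (if x ≤ i then μ x else 0) * (if i < y then μ y else 0) +
        (if i < x then μ x else 0) * (if y ≤ i then μ y else 0) := by
    intro x y
    simp only [min_le_iff, lt_max_iff]
    split_ifs <;> grind
  simp only [split, sum_add_distrib, ← sum_mul_sum, ← sum_filter]
  ring

theorem sum_sum_mul_sum_crossing (n : ℕ) (μ d : ℕ → ℝ) :
    ∑ x ∈ range (n + 1), ∑ y ∈ range (n + 1),
        μ x * μ y * ∑ i ∈ range n, (if min x y ≤ i ∧ i < max x y then d i else 0) =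
      2 * ∑ i ∈ range n, d i * (∑ k ∈ range (i + 1), μ k) * ∑ k ∈ Icc (i + 1) n, μ k := by
  have pull : ∀ x y, μ x * μ y * ∑ i ∈ range n, (if min x y ≤ i ∧ i < max x y then d i else 0) =
      ∑ i ∈ range n, d i * if min x y ≤ i ∧ i < max x y then μ x * μ y else 0 := by
    intro x y
    rw [mul_sum]
    exact sum_congr rfl fun i _ => by split_ifs <;> ring
  simp only [pull]
  rw [sum_congr rfl fun x _ => sum_comm, sum_comm, mul_sum]
  refine sum_congr rfl fun i hi => ?_
  rw [mem_range] at hi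
  have lower : {x ∈ range (n + 1) | x ≤ i} = range (i + 1) := by
    ext x; simp only [mem_filter, mem_range]; omega
  have upper : {x ∈ range (n + 1) | i < x} = Icc (i + 1) n := by
    ext x; simp only [mem_filter, mem_range, mem_Icc]; omega
  simp only [← mul_sum]
  rw [sum_sum_crossing_mul, lower, upper]
  ring

theorem stmt_8 (n : ℕ) (μ : ℕ → ℝ)
    (hμ : ∀ x, 0 ≤ μ x) (hsum : ∑ x ∈ Finset.range (n + 1), μ x = 1)
    (f : ℕ → ℝ) :
    ∑ x ∈ Finset.range (n + 1), f x ^ 2 * μ x -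
        (∑ x ∈ Finset.range (n + 1), f x * μ x) ^ 2 ≤
      (n : ℝ) * ∑ i ∈ Finset.range n, (f (i + 1) - f i) ^ 2 *
        (∑ k ∈ Finset.range (i + 1), μ k) * (∑ k ∈ Finset.Icc (i + 1) n, μ k) := by
  refine le_of_mul_le_mul_left ?_ (two_pos : (0 : ℝ) < 2)
  rw [two_mul_sum_sq_mul_sub_sq_sum_mul _ _ _ hsum]
  calc _ ≤ ∑ x ∈ range (n + 1), ∑ y ∈ range (n + 1), μ x * μ y *
          (n * ∑ i ∈ range n, if min x y ≤ i ∧ i < max x y then (f (i + 1) - f i) ^ 2 else 0) := by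
        gcongr with x hx y hy
        · exact mul_nonneg (hμ x) (hμ y)
        · exact sq_sub_le_mul_sum_crossing f (mem_range_succ_iff.mp hx) (mem_range_succ_iff.mp hy)
    _ = _ := by
        simp only [mul_left_comm _ (n : ℝ), ← mul_sum, sum_sum_mul_sum_crossing]
end

section
/- Let S be a finite set and suppose ψ : [0,t] → (S → ℝ) satisfies the linear ODE -(∂/∂s)ψ_s = λ_s·L_s ψ_s - H_s·ψ_s on [0,t] with terminal condition ψ_t = f, where for each s, L_s is a Q-matrix satisfying detailed balance with respect to a probability measure μ_s on S (so that ∑ₓ (L_s g)(x)μ_s(x) = 0 for all g), μ_s(x) = exp(-∫₀ˢ H_r(x) dr)·μ₀(x), and λ_s ≥ 0. Then s ↦ ∑ₓ ψ_s(x)·μ_s(x) is constant on [0,t]; in particular ∑ₓ ψ_s(x)μ_s(x) = ∑ₓ f(x)μ_t(x) for all s ∈ [0,t]. -/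
/-! The weight `μ_s` decays at rate `H_s`, which exactly cancels the Feynman–Kac potential term
`H_s ψ_s` in the backward equation. What remains of `(d/ds) ∑ₓ ψ_s(x) μ_s(x)` is
`-λ_s ∑ₓ μ_s(x) (L_s ψ_s)(x)`, and this vanishes because detailed balance and zero row sums make
`μ_s` invariant for `L_s`. -/

open Finset

theorem hasDerivAt_exp_neg_integral_mul {H : ℝ → ℝ} (hH : Continuous H) (c s : ℝ) :
    HasDerivAt (fun u => Real.exp (-∫ r in (0 : ℝ)..u, H r) * c)
      (-H s * (Real.exp (-∫ r in (0 : ℝ)..s, H r) * c)) s := by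
  have hint : HasDerivAt (fun u => ∫ r in (0 : ℝ)..u, H r) (H s) s :=
    (hH.integral_hasStrictDerivAt 0 s).hasDerivAt
  refine ((hint.neg.exp).mul_const c).congr_deriv ?_
  simp only [Pi.neg_apply]
  ring

theorem sum_mul_sum_mul_eq_zero_of_detailed_balance {S R : Type*} [Fintype S] [CommSemiring R]
    {μ : S → R} {L : S → S → R} (hdb : ∀ x y, μ x * L x y = μ y * L y x)
    (hrow : ∀ x, ∑ y, L x y = 0) (g : S → R) :
    ∑ x, μ x * ∑ y, L x y * g y = 0 := by
  calc ∑ x, μ x * ∑ y, L x y * g y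
      = ∑ y, g y * (μ y * ∑ x, L y x) := by
        simp_rw [mul_sum]
        rw [sum_comm]
        refine sum_congr rfl fun y _ => sum_congr rfl fun x _ => ?_
        rw [← mul_assoc, hdb x y]
        ring
    _ = 0 := by simp only [hrow, mul_zero, sum_const_zero]

theorem hasDerivAt_sum_mul_of_potential_cancel {S : Type*} [Fintype S]
    {ψ μ : ℝ → S → ℝ} {A H : S → ℝ} {c s : ℝ}
    (hψ : ∀ x, HasDerivAt (fun u => ψ u x) (-(c * A x - H x * ψ s x)) s)
    (hμ : ∀ x, HasDerivAt (fun u => μ u x) (-H x * μ s x) s) :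
    HasDerivAt (fun u => ∑ x, ψ u x * μ u x) (-c * ∑ x, μ s x * A x) s := by
  refine (HasDerivAt.fun_sum fun x _ => (hψ x).mul (hμ x)).congr_deriv ?_
  rw [mul_sum]
  refine sum_congr rfl fun x _ => ?_
  ring

theorem eq_of_hasDerivAt_zero_on_Icc {f : ℝ → ℝ} {a b : ℝ}
    (hf : ∀ x ∈ Set.Icc a b, HasDerivAt f 0 x) {x : ℝ} (hx : x ∈ Set.Icc a b) :
    f x = f b := by
  have hconst := constant_of_has_deriv_right_zero
    (fun y hy => (hf y hy).continuousAt.continuousWithinAt)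
    (fun y hy => (hf y (Set.mem_Icc_of_Ico hy)).hasDerivWithinAt)
  rw [hconst x hx, hconst b (Set.right_mem_Icc.2 (hx.1.trans hx.2))]

theorem stmt_13_general {S : Type*} [Fintype S] (t : ℝ)
    (ψ : ℝ → S → ℝ) (μ : ℝ → S → ℝ) (μ₀ : S → ℝ)
    (L : ℝ → S → S → ℝ) (H : ℝ → S → ℝ) (lam : ℝ → ℝ) (f : S → ℝ)
    (hHcont : ∀ x, Continuous fun r => H r x)
    (hμ : ∀ s x, μ s x = Real.exp (-∫ r in (0 : ℝ)..s, H r x) * μ₀ x)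
    (hQ2 : ∀ s ∈ Set.Icc 0 t, ∀ x, ∑ y, L s x y = 0)
    (hdb : ∀ s ∈ Set.Icc 0 t, ∀ x y, μ s x * L s x y = μ s y * L s y x)
    (hODE : ∀ s ∈ Set.Icc 0 t, ∀ x, HasDerivAt (fun u => ψ u x)
      (-(lam s * (∑ y, L s x y * ψ s y) - H s x * ψ s x)) s)
    (hterm : ψ t = f) :
    ∀ s ∈ Set.Icc 0 t, ∑ x, ψ s x * μ s x = ∑ x, f x * μ t x := by
  have hμderiv : ∀ s x, HasDerivAt (fun u => μ u x) (-H s x * μ s x) s := fun s x => by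
    simpa only [← hμ] using hasDerivAt_exp_neg_integral_mul (hHcont x) (μ₀ x) s
  have hderiv : ∀ s ∈ Set.Icc 0 t, HasDerivAt (fun u => ∑ x, ψ u x * μ u x) 0 s := fun s hs => by
    simpa only [sum_mul_sum_mul_eq_zero_of_detailed_balance (hdb s hs) (hQ2 s hs), mul_zero]
      using hasDerivAt_sum_mul_of_potential_cancel (hODE s hs) (hμderiv s)
  intro s hs
  rw [eq_of_hasDerivAt_zero_on_Icc hderiv hs, hterm]

theorem stmt_13 {S : Type*} [Fintype S] (t : ℝ) (ht : 0 ≤ t)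
    (ψ : ℝ → S → ℝ) (μ : ℝ → S → ℝ) (μ₀ : S → ℝ)
    (L : ℝ → S → S → ℝ) (H : ℝ → S → ℝ) (lam : ℝ → ℝ) (f : S → ℝ)
    (hHcont : ∀ x, Continuous fun r => H r x)
    (hμ : ∀ s x, μ s x = Real.exp (-∫ r in (0 : ℝ)..s, H r x) * μ₀ x)
    (hμ₀ : ∀ x, 0 ≤ μ₀ x) (hμ₀sum : ∑ x, μ₀ x = 1)
    (hQ1 : ∀ s ∈ Set.Icc 0 t, ∀ x y, x ≠ y → 0 ≤ L s x y)
    (hQ2 : ∀ s ∈ Set.Icc 0 t, ∀ x, ∑ y, L s x y = 0)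
    (hdb : ∀ s ∈ Set.Icc 0 t, ∀ x y, μ s x * L s x y = μ s y * L s y x)
    (hlam : ∀ s ∈ Set.Icc 0 t, 0 ≤ lam s)
    (hODE : ∀ s ∈ Set.Icc 0 t, ∀ x, HasDerivAt (fun u => ψ u x)
      (-(lam s * (∑ y, L s x y * ψ s y) - H s x * ψ s x)) s)
    (hterm : ψ t = f) :
    ∀ s ∈ Set.Icc 0 t, ∑ x, ψ s x * μ s x = ∑ x, f x * μ t x :=
  stmt_13_general t ψ μ μ₀ L H lam f hHcont hμ hQ2 hdb hODE hterm
end
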